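/- E[X] = (m/(2(k−1))) · Γ(k)/Γ((2k−1)/2). -/

import Mathlib

open MeasureTheory ProbabilityTheory Real Filter

/-- Density of the Beta distribution `β(u,v)` with respect to Lebesgue measure. -/
noncomputable def betaPDFReal (u v x : ℝ) : ℝ :=
  if 0 < x ∧ x < 1 then
    Real.Gamma (u + v) / (Real.Gamma u * Real.Gamma v) * x ^ (u - 1) * (1 - x) ^ (v - 1)
  else 0

/-- The Beta distribution `β(u,v)` on `ℝ`. -/
noncomputable def betaMeasure (u v : ℝ) : Measure ℝ :=
  volume.withDensity fun x => ENNReal.ofReal (_root_.betaPDFReal u v x)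

/-- Density of the generalized Gamma distribution `GG(u,v)` w.r.t. Lebesgue measure. -/
noncomputable def genGammaPDFReal (u v x : ℝ) : ℝ :=
  if 0 < x then v / Real.Gamma (u / v) * x ^ (u - 1) * Real.exp (-(x ^ v)) else 0

/-- The generalized Gamma distribution `GG(u,v)` on `ℝ`. -/
noncomputable def genGammaMeasure (u v : ℝ) : Measure ℝ :=
  volume.withDensity fun x => ENNReal.ofReal (genGammaPDFReal u v x)

/-!
By independence, `E[(1 - B) Z] = E[1 - B] · E[Z]`, and both factors are computed by
size-biasing: `(1 - x)` times the `β(a, b)` density is `b / (a + b)` times the `β(a, b + 1)`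
density, and `x` times the `GG(u, v)` density is `Γ((u + 1) / v) / Γ(u / v)` times the
`GG(u + 1, v)` density. Since densities integrate to one, `E[1 - B] = m / (2(k - 1))` and
`E[Z] = Γ(k) / Γ((2k - 1) / 2)`.
-/

open Set

lemma integral_withDensity_ofReal {α : Type*} [MeasurableSpace α] {μ : Measure α} {f g : α → ℝ}
    (hf : AEMeasurable f μ) (hf_nonneg : 0 ≤ᵐ[μ] f) :
    ∫ x, g x ∂μ.withDensity (fun x => ENNReal.ofReal (f x)) = ∫ x, f x * g x ∂μ := by
  rw [integral_withDensity_eq_integral_toReal_smul₀ hf.ennreal_ofReal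
    (ae_of_all _ fun _ => ENNReal.ofReal_lt_top)]
  refine integral_congr_ae ?_
  filter_upwards [hf_nonneg] with x hx
  simp [ENNReal.toReal_ofReal hx]

section Beta

variable {a b : ℝ}

lemma betaPDFReal_eq_probabilityTheory_betaPDFReal :
    _root_.betaPDFReal = ProbabilityTheory.betaPDFReal := by
  ext u v x
  simp [_root_.betaPDFReal, ProbabilityTheory.betaPDFReal, ProbabilityTheory.beta]

lemma betaPDFReal_nonneg (ha : 0 < a) (hb : 0 < b) (x : ℝ) :
    0 ≤ ProbabilityTheory.betaPDFReal a b x := by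
  by_cases hx : 0 < x ∧ x < 1
  · exact (betaPDFReal_pos hx.1 hx.2 ha hb).le
  · simp [ProbabilityTheory.betaPDFReal, hx]

lemma integral_betaPDFReal (ha : 0 < a) (hb : 0 < b) :
    ∫ x, ProbabilityTheory.betaPDFReal a b x = 1 := by
  rw [integral_eq_lintegral_of_nonneg_ae (ae_of_all _ (betaPDFReal_nonneg ha hb)) (by fun_prop)]
  exact congrArg ENNReal.toReal (lintegral_betaPDF_eq_one ha hb)

lemma beta_add_one_right (ha : 0 < a) (hb : 0 < b) :
    ProbabilityTheory.beta a (b + 1) = b / (a + b) * ProbabilityTheory.beta a b := by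
  have hab : 0 < a + b := add_pos ha hb
  rw [ProbabilityTheory.beta, ProbabilityTheory.beta, ← add_assoc, Gamma_add_one hb.ne',
    Gamma_add_one hab.ne']
  have := Gamma_pos_of_pos hab
  field_simp

lemma betaPDFReal_mul_one_sub (ha : 0 < a) (hb : 0 < b) (x : ℝ) :
    ProbabilityTheory.betaPDFReal a b x * (1 - x)
      = b / (a + b) * ProbabilityTheory.betaPDFReal a (b + 1) x := by
  unfold ProbabilityTheory.betaPDFReal
  split_ifs with hx
  · have h1x : 1 - x ≠ 0 := by linarith [hx.2]
    have := beta_pos ha hb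
    rw [beta_add_one_right ha hb, add_sub_cancel_right, rpow_sub_one h1x]
    field_simp
  · simp

lemma integral_one_sub_betaMeasure (ha : 0 < a) (hb : 0 < b) :
    ∫ x, (1 - x) ∂_root_.betaMeasure a b = b / (a + b) := by
  rw [_root_.betaMeasure, betaPDFReal_eq_probabilityTheory_betaPDFReal,
    integral_withDensity_ofReal (by fun_prop) (ae_of_all _ (betaPDFReal_nonneg ha hb))]
  simp_rw [betaPDFReal_mul_one_sub ha hb]
  rw [integral_const_mul, integral_betaPDFReal ha (by linarith), mul_one]

end Beta

section GenGamma

variable {u v : ℝ}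

lemma genGammaPDFReal_of_pos {x : ℝ} (hx : 0 < x) :
    genGammaPDFReal u v x = v / Gamma (u / v) * x ^ (u - 1) * exp (-(x ^ v)) :=
  if_pos hx

lemma genGammaPDFReal_of_nonpos {x : ℝ} (hx : x ≤ 0) : genGammaPDFReal u v x = 0 :=
  if_neg hx.not_gt

@[fun_prop]
lemma measurable_genGammaPDFReal : Measurable (genGammaPDFReal u v) :=
  Measurable.ite measurableSet_Ioi (by fun_prop) measurable_const

lemma genGammaPDFReal_nonneg (hu : 0 < u) (hv : 0 < v) (x : ℝ) : 0 ≤ genGammaPDFReal u v x := by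
  unfold genGammaPDFReal
  split_ifs
  · have := Gamma_pos_of_pos (div_pos hu hv)
    positivity
  · rfl

lemma integral_genGammaPDFReal (hu : 0 < u) (hv : 0 < v) : ∫ x, genGammaPDFReal u v x = 1 := by
  rw [← setIntegral_eq_integral_of_forall_compl_eq_zero (s := Ioi 0) fun x hx =>
      genGammaPDFReal_of_nonpos (not_lt.mp hx),
    setIntegral_congr_fun measurableSet_Ioi fun x hx => genGammaPDFReal_of_pos hx]
  simp_rw [mul_assoc]
  rw [integral_const_mul, integral_rpow_mul_exp_neg_rpow hv (by linarith), sub_add_cancel]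
  have := Gamma_pos_of_pos (div_pos hu hv)
  field_simp

lemma genGammaPDFReal_mul_id (hu : 0 < u) (hv : 0 < v) (x : ℝ) :
    genGammaPDFReal u v x * x
      = Gamma ((u + 1) / v) / Gamma (u / v) * genGammaPDFReal (u + 1) v x := by
  unfold genGammaPDFReal
  split_ifs with hx
  · have := Gamma_pos_of_pos (div_pos hu hv)
    rw [add_sub_cancel_right, rpow_sub_one hx.ne']
    field_simp
  · simp

lemma integral_id_genGammaMeasure (hu : 0 < u) (hv : 0 < v) :
    ∫ x, x ∂genGammaMeasure u v = Gamma ((u + 1) / v) / Gamma (u / v) := by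
  rw [genGammaMeasure, integral_withDensity_ofReal (by fun_prop)
    (ae_of_all _ (genGammaPDFReal_nonneg hu hv))]
  simp_rw [genGammaPDFReal_mul_id hu hv]
  rw [integral_const_mul, integral_genGammaPDFReal (by linarith) hv, mul_one]

end GenGamma

lemma ProbabilityTheory.IndepFun.integral_one_sub_mul_of_betaMeasure_of_genGammaMeasure
    {Ω : Type*} [MeasurableSpace Ω] {P : Measure Ω} {B Z : Ω → ℝ} {a b u v : ℝ}
    (ha : 0 < a) (hb : 0 < b) (hu : 0 < u) (hv : 0 < v) (hindep : IndepFun B Z P)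
    (hB : AEMeasurable B P) (hZ : AEMeasurable Z P)
    (hlawB : P.map B = _root_.betaMeasure a b) (hlawZ : P.map Z = genGammaMeasure u v) :
    ∫ ω, (1 - B ω) * Z ω ∂P = b / (a + b) * (Gamma ((u + 1) / v) / Gamma (u / v)) := by
  have hEZ : ∫ ω, Z ω ∂P = ∫ x, x ∂P.map Z := (integral_map hZ aestronglyMeasurable_id).symm
  rw [hindep.integral_fun_comp_mul_comp (f := fun x => 1 - x) (g := fun x => x) hB hZ
      (by fun_prop) (by fun_prop), ← integral_map hB (by fun_prop), hEZ,
    hlawB, hlawZ, integral_one_sub_betaMeasure ha hb, integral_id_genGammaMeasure hu hv]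

theorem limit_degree_first_moment_general {Ω : Type*} [MeasurableSpace Ω] (P : Measure Ω)
    (k m : ℕ) (hm1 : 1 ≤ m) (hm2 : m ≤ 2 * k - 3)
    (B Z : Ω → ℝ) (hB : Measurable B) (hZ : Measurable Z) (hindep : IndepFun B Z P)
    (hlawB : P.map B = _root_.betaMeasure (2 * ((k : ℝ) - 1) - m) m)
    (hlawZ : P.map Z = genGammaMeasure (2 * (k : ℝ) - 1) 2) :
    ∫ ω, (1 - B ω) * Z ω ∂P
      = (m : ℝ) / (2 * ((k : ℝ) - 1)) * (Real.Gamma k / Real.Gamma ((2 * (k : ℝ) - 1) / 2)) := by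
  have hm : (1 : ℝ) ≤ m := by exact_mod_cast hm1
  have hmk : (m : ℝ) + 3 ≤ 2 * k := by exact_mod_cast (by omega : m + 3 ≤ 2 * k)
  rw [hindep.integral_one_sub_mul_of_betaMeasure_of_genGammaMeasure (by linarith) (by linarith)
    (by linarith) two_pos hB.aemeasurable hZ.aemeasurable hlawB hlawZ, sub_add_cancel,
    sub_add_cancel, mul_div_cancel_left₀ _ two_ne_zero]

/-- First moment of `X = (1-B)Z` where `B ~ β(2(k-1)-m, m)` and `Z ~ GG(2k-1, 2)` are
independent: `E[X] = (m/(2(k-1))) * Γ(k)/Γ((2k-1)/2)`. -/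
theorem limit_degree_first_moment {Ω : Type*} [MeasurableSpace Ω] (P : Measure Ω) [IsProbabilityMeasure P]
    (k m : ℕ) (hk : 2 ≤ k) (hm1 : 1 ≤ m) (hm2 : m ≤ 2 * k - 3)
    (B Z : Ω → ℝ) (hB : Measurable B) (hZ : Measurable Z) (hindep : IndepFun B Z P)
    (hlawB : P.map B = _root_.betaMeasure (2 * ((k : ℝ) - 1) - m) m)
    (hlawZ : P.map Z = genGammaMeasure (2 * (k : ℝ) - 1) 2) :
    ∫ ω, (1 - B ω) * Z ω ∂P
      = (m : ℝ) / (2 * ((k : ℝ) - 1)) * (Real.Gamma k / Real.Gamma ((2 * (k : ℝ) - 1) / 2)) :=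
  limit_degree_first_moment_general P k m hm1 hm2 B Z hB hZ hindep hlawB hlawZ
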